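/- Let H ∈ ℂ^{16 × 16} be the 4-qubit antiferromagnetic Heisenberg Hamiltonian on a line, H = −(1/4)·Σ_{i=1}^{3} (X_i X_{i+1} + Y_i Y_{i+1} + Z_i Z_{i+1}), where X_i, Y_i, Z_i act as the Pauli matrices X, Y, Z on the i-th tensor factor of (ℂ²)^{⊗4} and as identity elsewhere. Then the largest eigenvalue of H equals (3 + 2√3)/4. -/
import Mathlib

open Matrix
open scoped Kronecker

noncomputable section

/-- Pauli X. -/
def pauliX : Matrix (Fin 2) (Fin 2) ℂ := !![0, 1; 1, 0]
/-- Pauli Y. -/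
def pauliY : Matrix (Fin 2) (Fin 2) ℂ := !![0, -Complex.I; Complex.I, 0]
/-- Pauli Z. -/
def pauliZ : Matrix (Fin 2) (Fin 2) ℂ := !![1, 0; 0, -1]

/-- The 4-fold tensor (Kronecker) product of four 1-qubit operators. -/
def op4 (A B C D : Matrix (Fin 2) (Fin 2) ℂ) :
    Matrix (Fin 2 × Fin 2 × Fin 2 × Fin 2) (Fin 2 × Fin 2 × Fin 2 × Fin 2) ℂ :=
  A ⊗ₖ (B ⊗ₖ (C ⊗ₖ D))

/-- The 4-qubit antiferromagnetic Heisenberg Hamiltonian on a line: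
`H = -(1/4) Σ_{i=1}^{3} (X_i X_{i+1} + Y_i Y_{i+1} + Z_i Z_{i+1})`. -/
def heis4 : Matrix (Fin 2 × Fin 2 × Fin 2 × Fin 2) (Fin 2 × Fin 2 × Fin 2 × Fin 2) ℂ :=
  (-(1/4 : ℂ)) •
    (op4 pauliX pauliX 1 1 + op4 pauliY pauliY 1 1 + op4 pauliZ pauliZ 1 1
      + op4 1 pauliX pauliX 1 + op4 1 pauliY pauliY 1 + op4 1 pauliZ pauliZ 1
      + op4 1 1 pauliX pauliX + op4 1 1 pauliY pauliY + op4 1 1 pauliZ pauliZ)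

namespace Heis4Aux

abbrev idx : Type := Fin 2 × Fin 2 × Fin 2 × Fin 2

def tK : Matrix (Fin 16) (Fin 16) ℤ := !![3, 0, 0, 0, 0, 0, 0, 0, 0, 0, 0, 0, 0, 0, 0, 0;
  0, 1, 2, 0, 0, 0, 0, 0, 0, 0, 0, 0, 0, 0, 0, 0;
  0, 2, -1, 0, 2, 0, 0, 0, 0, 0, 0, 0, 0, 0, 0, 0;
  0, 0, 0, 1, 0, 2, 0, 0, 0, 0, 0, 0, 0, 0, 0, 0;
  0, 0, 2, 0, -1, 0, 0, 0, 2, 0, 0, 0, 0, 0, 0, 0;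
  0, 0, 0, 2, 0, -3, 2, 0, 0, 2, 0, 0, 0, 0, 0, 0;
  0, 0, 0, 0, 0, 2, -1, 0, 0, 0, 2, 0, 0, 0, 0, 0;
  0, 0, 0, 0, 0, 0, 0, 1, 0, 0, 0, 2, 0, 0, 0, 0;
  0, 0, 0, 0, 2, 0, 0, 0, 1, 0, 0, 0, 0, 0, 0, 0;
  0, 0, 0, 0, 0, 2, 0, 0, 0, -1, 2, 0, 0, 0, 0, 0;
  0, 0, 0, 0, 0, 0, 2, 0, 0, 2, -3, 0, 2, 0, 0, 0;
  0, 0, 0, 0, 0, 0, 0, 2, 0, 0, 0, -1, 0, 2, 0, 0;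
  0, 0, 0, 0, 0, 0, 0, 0, 0, 0, 2, 0, 1, 0, 0, 0;
  0, 0, 0, 0, 0, 0, 0, 0, 0, 0, 0, 2, 0, -1, 2, 0;
  0, 0, 0, 0, 0, 0, 0, 0, 0, 0, 0, 0, 0, 2, 1, 0;
  0, 0, 0, 0, 0, 0, 0, 0, 0, 0, 0, 0, 0, 0, 0, 3]

def tL1 : Matrix (Fin 16) (Fin 16) ℤ := !![0, 0, 0, 0, 0, 0, 0, 0, 0, 0, 0, 0, 0, 0, 0, 0;
  0, 0, -4, 0, 4, 0, 0, 0, 0, 0, 0, 0, 0, 0, 0, 0;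
  0, -4, 8, 0, -8, 0, 0, 0, 4, 0, 0, 0, 0, 0, 0, 0;
  0, 0, 0, 0, 0, -8, 4, 0, 0, 4, 0, 0, 0, 0, 0, 0;
  0, 4, -8, 0, 8, 0, 0, 0, -4, 0, 0, 0, 0, 0, 0, 0;
  0, 0, 0, -8, 0, 24, -12, 0, 0, -12, 8, 0, 0, 0, 0, 0;
  0, 0, 0, 4, 0, -12, 8, 0, 0, 8, -12, 0, 4, 0, 0, 0;
  0, 0, 0, 0, 0, 0, 0, 0, 0, 0, 0, -4, 0, 4, 0, 0;
  0, 0, 4, 0, -4, 0, 0, 0, 0, 0, 0, 0, 0, 0, 0, 0;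
  0, 0, 0, 4, 0, -12, 8, 0, 0, 8, -12, 0, 4, 0, 0, 0;
  0, 0, 0, 0, 0, 8, -12, 0, 0, -12, 24, 0, -8, 0, 0, 0;
  0, 0, 0, 0, 0, 0, 0, -4, 0, 0, 0, 8, 0, -8, 4, 0;
  0, 0, 0, 0, 0, 0, 4, 0, 0, 4, -8, 0, 0, 0, 0, 0;
  0, 0, 0, 0, 0, 0, 0, 4, 0, 0, 0, -8, 0, 8, -4, 0;
  0, 0, 0, 0, 0, 0, 0, 0, 0, 0, 0, 4, 0, -4, 0, 0;
  0, 0, 0, 0, 0, 0, 0, 0, 0, 0, 0, 0, 0, 0, 0, 0]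

def tM1 : Matrix (Fin 16) (Fin 16) ℤ := !![24, 0, 0, 0, 0, 0, 0, 0, 0, 0, 0, 0, 0, 0, 0, 0;
  0, 8, 12, 0, 4, 0, 0, 0, 0, 0, 0, 0, 0, 0, 0, 0;
  0, 12, 0, 0, 8, 0, 0, 0, 4, 0, 0, 0, 0, 0, 0, 0;
  0, 0, 0, 8, 0, 8, 4, 0, 0, 4, 0, 0, 0, 0, 0, 0;
  0, 4, 8, 0, 0, 0, 0, 0, 12, 0, 0, 0, 0, 0, 0, 0;
  0, 0, 0, 8, 0, 0, 4, 0, 0, 4, 8, 0, 0, 0, 0, 0;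
  0, 0, 0, 4, 0, 4, 0, 0, 0, 8, 4, 0, 4, 0, 0, 0;
  0, 0, 0, 0, 0, 0, 0, 8, 0, 0, 0, 12, 0, 4, 0, 0;
  0, 0, 4, 0, 12, 0, 0, 0, 8, 0, 0, 0, 0, 0, 0, 0;
  0, 0, 0, 4, 0, 4, 8, 0, 0, 0, 4, 0, 4, 0, 0, 0;
  0, 0, 0, 0, 0, 8, 4, 0, 0, 4, 0, 0, 8, 0, 0, 0;
  0, 0, 0, 0, 0, 0, 0, 12, 0, 0, 0, 0, 0, 8, 4, 0;
  0, 0, 0, 0, 0, 0, 4, 0, 0, 4, 8, 0, 8, 0, 0, 0;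
  0, 0, 0, 0, 0, 0, 0, 4, 0, 0, 0, 8, 0, 0, 12, 0;
  0, 0, 0, 0, 0, 0, 0, 0, 0, 0, 0, 4, 0, 12, 8, 0;
  0, 0, 0, 0, 0, 0, 0, 0, 0, 0, 0, 0, 0, 0, 0, 24]

def tM2 : Matrix (Fin 16) (Fin 16) ℤ := !![8, 0, 0, 0, 0, 0, 0, 0, 0, 0, 0, 0, 0, 0, 0, 0;
  0, 0, 4, 0, 4, 0, 0, 0, 0, 0, 0, 0, 0, 0, 0, 0;
  0, 4, 0, 0, 0, 0, 0, 0, 4, 0, 0, 0, 0, 0, 0, 0;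
  0, 0, 0, 0, 0, 0, 4, 0, 0, 4, 0, 0, 0, 0, 0, 0;
  0, 4, 0, 0, 0, 0, 0, 0, 4, 0, 0, 0, 0, 0, 0, 0;
  0, 0, 0, 0, 0, 8, -4, 0, 0, -4, 8, 0, 0, 0, 0, 0;
  0, 0, 0, 4, 0, -4, 0, 0, 0, 8, -4, 0, 4, 0, 0, 0;
  0, 0, 0, 0, 0, 0, 0, 0, 0, 0, 0, 4, 0, 4, 0, 0;
  0, 0, 4, 0, 4, 0, 0, 0, 0, 0, 0, 0, 0, 0, 0, 0;
  0, 0, 0, 4, 0, -4, 8, 0, 0, 0, -4, 0, 4, 0, 0, 0;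
  0, 0, 0, 0, 0, 8, -4, 0, 0, -4, 8, 0, 0, 0, 0, 0;
  0, 0, 0, 0, 0, 0, 0, 4, 0, 0, 0, 0, 0, 0, 4, 0;
  0, 0, 0, 0, 0, 0, 4, 0, 0, 4, 0, 0, 0, 0, 0, 0;
  0, 0, 0, 0, 0, 0, 0, 4, 0, 0, 0, 0, 0, 0, 4, 0;
  0, 0, 0, 0, 0, 0, 0, 0, 0, 0, 0, 4, 0, 4, 0, 0;
  0, 0, 0, 0, 0, 0, 0, 0, 0, 0, 0, 0, 0, 0, 0, 8]

def tL3 : Matrix (Fin 16) (Fin 16) ℤ := !![0, 0, 0, 0, 0, 0, 0, 0, 0, 0, 0, 0, 0, 0, 0, 0;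
  0, -32, 32, 0, -32, 0, 0, 0, 32, 0, 0, 0, 0, 0, 0, 0;
  0, 32, -96, 0, 96, 0, 0, 0, -32, 0, 0, 0, 0, 0, 0, 0;
  0, 0, 0, -32, 0, 32, 0, 0, 0, 0, -32, 0, 32, 0, 0, 0;
  0, -32, 96, 0, -96, 0, 0, 0, 32, 0, 0, 0, 0, 0, 0, 0;
  0, 0, 0, 32, 0, -96, 0, 0, 0, 0, 96, 0, -32, 0, 0, 0;
  0, 0, 0, 0, 0, 0, 0, 0, 0, 0, 0, 0, 0, 0, 0, 0;
  0, 0, 0, 0, 0, 0, 0, -32, 0, 0, 0, 32, 0, -32, 32, 0;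
  0, 32, -32, 0, 32, 0, 0, 0, -32, 0, 0, 0, 0, 0, 0, 0;
  0, 0, 0, 0, 0, 0, 0, 0, 0, 0, 0, 0, 0, 0, 0, 0;
  0, 0, 0, -32, 0, 96, 0, 0, 0, 0, -96, 0, 32, 0, 0, 0;
  0, 0, 0, 0, 0, 0, 0, 32, 0, 0, 0, -96, 0, 96, -32, 0;
  0, 0, 0, 32, 0, -32, 0, 0, 0, 0, 32, 0, -32, 0, 0, 0;
  0, 0, 0, 0, 0, 0, 0, -32, 0, 0, 0, 96, 0, -96, 32, 0;
  0, 0, 0, 0, 0, 0, 0, 32, 0, 0, 0, -32, 0, 32, -32, 0;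
  0, 0, 0, 0, 0, 0, 0, 0, 0, 0, 0, 0, 0, 0, 0, 0]


/-- The equivalence between the 4-qubit index type and `Fin 16`. -/
def eidx : idx ≃ Fin 16 where
  toFun p := ⟨p.1.val*8+p.2.1.val*4+p.2.2.1.val*2+p.2.2.2.val, by omega⟩
  invFun n := (⟨n.val/8, by omega⟩, ⟨n.val/4 % 2, by omega⟩, ⟨n.val/2 % 2, by omega⟩,
    ⟨n.val % 2, by omega⟩)
  left_inv := by decide
  right_inv := by decide

def op4z (A B C D : Matrix (Fin 2) (Fin 2) ℤ) : Matrix idx idx ℤ :=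
  A ⊗ₖ (B ⊗ₖ (C ⊗ₖ D))

def Xz : Matrix (Fin 2) (Fin 2) ℤ := !![0, 1; 1, 0]
def Wz : Matrix (Fin 2) (Fin 2) ℤ := !![0, -1; 1, 0]
def Zz : Matrix (Fin 2) (Fin 2) ℤ := !![1, 0; 0, -1]

def Kzi : Matrix idx idx ℤ :=
  op4z Xz Xz 1 1 - op4z Wz Wz 1 1 + op4z Zz Zz 1 1
    + op4z 1 Xz Xz 1 - op4z 1 Wz Wz 1 + op4z 1 Zz Zz 1
    + op4z 1 1 Xz Xz - op4z 1 1 Wz Wz + op4z 1 1 Zz Zz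

set_option maxRecDepth 100000 in
set_option maxHeartbeats 2000000 in
lemma Kzi_eq_sub : Kzi = tK.submatrix eidx eidx := by decide

set_option maxRecDepth 100000 in
set_option maxHeartbeats 2000000 in
lemma htL1 : (tK + 1) * (tK - 3) = tL1 := by decide

set_option maxRecDepth 100000 in
set_option maxHeartbeats 2000000 in
lemma htM1 : (tK + 3)^2 - 12 = tM1 := by decide

set_option maxRecDepth 100000 in
set_option maxHeartbeats 2000000 in
lemma htM2 : (tK + 1)^2 - 8 = tM2 := by decide

set_option maxRecDepth 100000 in
set_option maxHeartbeats 2000000 in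
lemma htL3 : tL1 * tM1 = tL3 := by decide

set_option maxRecDepth 100000 in
set_option maxHeartbeats 2000000 in
lemma htfin : tL3 * tM2 = 0 := by decide

lemma tK_poly : (tK + 1) * (tK - 3) * ((tK + 3)^2 - 12) * ((tK + 1)^2 - 8) = 0 := by
  rw [htM1, htM2, htL1, htL3, htfin]

lemma Kzi_eq_reindex : Kzi = (Matrix.reindexAlgEquiv ℤ ℤ eidx.symm) tK := by
  rw [Kzi_eq_sub]
  simp [Matrix.reindexAlgEquiv_apply, Matrix.reindex_apply]

lemma Kzi_poly : (Kzi + 1) * (Kzi - 3) * ((Kzi + 3)^2 - 12) * ((Kzi + 1)^2 - 8) = 0 := by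
  rw [Kzi_eq_reindex]
  have h := congrArg (Matrix.reindexAlgEquiv ℤ ℤ eidx.symm) tK_poly
  simp only [_root_.map_mul, _root_.map_add, _root_.map_sub, map_pow, map_ofNat,
    _root_.map_one, _root_.map_zero] at h
  exact h

/-- `W = -iY` over ℂ. -/
def Wc : Matrix (Fin 2) (Fin 2) ℂ := !![0, -1; 1, 0]

/-- The integer matrix `-4 • heis4`, over ℂ. -/
def Kc : Matrix idx idx ℂ :=
  op4 pauliX pauliX 1 1 - op4 Wc Wc 1 1 + op4 pauliZ pauliZ 1 1
    + op4 1 pauliX pauliX 1 - op4 1 Wc Wc 1 + op4 1 pauliZ pauliZ 1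
    + op4 1 1 pauliX pauliX - op4 1 1 Wc Wc + op4 1 1 pauliZ pauliZ

lemma hop4map (A B C D : Matrix (Fin 2) (Fin 2) ℤ) :
    (Int.castRingHom ℂ).mapMatrix (op4z A B C D)
      = op4 (A.map Int.cast) (B.map Int.cast) (C.map Int.cast) (D.map Int.cast) := by
  ext ⟨a, b, c, d⟩ ⟨a', b', c', d'⟩
  simp [op4z, op4, Matrix.kroneckerMap_apply, Matrix.map_apply, RingHom.mapMatrix_apply]

lemma hXmap : Xz.map (Int.cast : ℤ → ℂ) = pauliX := by
  ext i j; fin_cases i <;> fin_cases j <;> simp [Xz, pauliX]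

lemma hWmap : Wz.map (Int.cast : ℤ → ℂ) = Wc := by
  ext i j; fin_cases i <;> fin_cases j <;> simp [Wz, Wc]

lemma hZmap : Zz.map (Int.cast : ℤ → ℂ) = pauliZ := by
  ext i j; fin_cases i <;> fin_cases j <;> simp [Zz, pauliZ]

lemma h1map : (1 : Matrix (Fin 2) (Fin 2) ℤ).map (Int.cast : ℤ → ℂ) = 1 := by
  ext i j; fin_cases i <;> fin_cases j <;> simp [Matrix.one_apply]

lemma hKcmap : (Int.castRingHom ℂ).mapMatrix Kzi = Kc := by
  rw [Kzi]
  simp only [_root_.map_add, _root_.map_sub, hop4map, hXmap, hWmap, hZmap, h1map, Kc]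

lemma Kc_poly : (Kc + 1) * (Kc - 3) * ((Kc + 3)^2 - 12) * ((Kc + 1)^2 - 8) = 0 := by
  have h := congrArg ((Int.castRingHom ℂ).mapMatrix) Kzi_poly
  simp only [_root_.map_mul, _root_.map_add, _root_.map_sub, map_pow, map_ofNat,
    _root_.map_one, _root_.map_zero, hKcmap] at h
  exact h

lemma hY_smul : pauliY = Complex.I • Wc := by
  ext i j; fin_cases i <;> fin_cases j <;> simp [pauliY, Wc]

lemma hYY1 : op4 pauliY pauliY 1 1 = - op4 Wc Wc 1 1 := by
  rw [hY_smul]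
  simp only [op4, Matrix.smul_kronecker, Matrix.kronecker_smul, smul_smul]
  rw [Complex.I_mul_I, neg_one_smul]

lemma hYY2 : op4 1 pauliY pauliY 1 = - op4 1 Wc Wc 1 := by
  rw [hY_smul]
  simp only [op4, Matrix.smul_kronecker, Matrix.kronecker_smul, smul_smul]
  rw [Complex.I_mul_I, neg_one_smul]

lemma hYY3 : op4 1 1 pauliY pauliY = - op4 1 1 Wc Wc := by
  rw [hY_smul]
  simp only [op4, Matrix.smul_kronecker, Matrix.kronecker_smul, smul_smul]
  rw [Complex.I_mul_I, neg_one_smul]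

lemma heis4_eq : heis4 = (-(1/4 : ℂ)) • Kc := by
  rw [heis4, hYY1, hYY2, hYY3, Kc]
  congr 1
  try abel

/-- Eigenvector for the largest eigenvalue (with `s` standing for `√3`). -/
def vv (s : ℂ) : idx → ℂ := fun p =>
  if p = (0,0,1,1) then 1
  else if p = (0,1,0,1) then -2-s
  else if p = (0,1,1,0) then 1+s
  else if p = (1,0,0,1) then 1+s
  else if p = (1,0,1,0) then -2-s
  else if p = (1,1,0,0) then 1
  else 0

set_option maxHeartbeats 1000000 in
lemma Kc_mulVec (s : ℂ) (hs : s^2 = 3) : Kc.mulVec (vv s) = (-3-2*s) • vv s := by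
  funext p
  obtain ⟨a, b, c, d⟩ := p
  fin_cases a <;> fin_cases b <;> fin_cases c <;> fin_cases d <;>
    · simp only [Kc, op4, Matrix.mulVec, dotProduct, Fintype.sum_prod_type,
        Fin.sum_univ_two, vv, Matrix.kroneckerMap_apply, Matrix.sub_apply, Matrix.add_apply,
        Matrix.one_apply, pauliX, pauliZ, Wc, Pi.smul_apply, smul_eq_mul,
        Matrix.cons_val', Matrix.cons_val_zero, Matrix.cons_val_one, Matrix.head_cons,
        Matrix.head_fin_const, Matrix.empty_val', Matrix.cons_val_fin_one]
      norm_num [Prod.ext_iff, Fin.ext_iff] <;>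
        first
          | linear_combination (2:ℂ) * hs
          | linear_combination (-2:ℂ) * hs
          | ring_nf
          | skip

lemma heis4_mulVec (s : ℂ) (hs : s^2 = 3) :
    heis4.mulVec (vv s) = ((3 + 2*s)/4) • vv s := by
  have hc : (-(1/4:ℂ)) * (-3-2*s) = (3+2*s)/4 := by ring
  rw [heis4_eq, Matrix.smul_mulVec, Kc_mulVec s hs, smul_smul, hc]

/-- The annihilating polynomial. -/
def pAnn : Polynomial ℂ :=
  (Polynomial.C 4 * Polynomial.X - 1) * (Polynomial.C 4 * Polynomial.X + 3)
    * ((Polynomial.C 4 * Polynomial.X - 3)^2 - 12) * ((Polynomial.C 4 * Polynomial.X - 1)^2 - 8)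

lemma aeval_heis4 : Polynomial.aeval heis4 pAnn = 0 := by
  have h4 : (algebraMap ℂ (Matrix idx idx ℂ)) 4 * heis4 = -Kc := by
    rw [heis4_eq, Algebra.algebraMap_eq_smul_one, smul_mul_assoc, one_mul, smul_smul]
    norm_num
  have hstep : Polynomial.aeval heis4 pAnn
      = ((algebraMap ℂ (Matrix idx idx ℂ)) 4 * heis4 - 1)
        * ((algebraMap ℂ (Matrix idx idx ℂ)) 4 * heis4 + 3)
        * (((algebraMap ℂ (Matrix idx idx ℂ)) 4 * heis4 - 3)^2 - 12)
        * (((algebraMap ℂ (Matrix idx idx ℂ)) 4 * heis4 - 1)^2 - 8) := by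
    simp [pAnn, map_ofNat]
  rw [hstep, h4]
  calc (-Kc - 1) * (-Kc + 3) * ((-Kc - 3)^2 - 12) * ((-Kc - 1)^2 - 8)
      = (Kc + 1) * (Kc - 3) * ((Kc + 3)^2 - 12) * ((Kc + 1)^2 - 8) := by noncomm_ring
    _ = 0 := Kc_poly

end Heis4Aux

open Heis4Aux in
theorem heis4_lamMax :
    IsGreatest {x : ℝ | (x : ℂ) ∈ spectrum ℂ heis4} ((3 + 2 * Real.sqrt 3) / 4) := by
  have ht : (Real.sqrt 3)^2 = 3 := Real.sq_sqrt (by norm_num)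
  have ht0 : (0:ℝ) ≤ Real.sqrt 3 := Real.sqrt_nonneg 3
  have hsC : ((Real.sqrt 3 : ℝ) : ℂ)^2 = 3 := by
    rw [← Complex.ofReal_pow, ht]; norm_num
  constructor
  · -- membership
    show (((3 + 2 * Real.sqrt 3) / 4 : ℝ) : ℂ) ∈ spectrum ℂ heis4
    rw [spectrum.mem_iff]
    intro hu
    have hinj := Matrix.mulVec_injective_iff_isUnit.mpr hu
    have hv : (algebraMap ℂ (Matrix idx idx ℂ) (((3 + 2 * Real.sqrt 3) / 4 : ℝ) : ℂ)
        - heis4).mulVec (vv ((Real.sqrt 3 : ℝ) : ℂ)) = 0 := by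
      rw [Matrix.sub_mulVec, Algebra.algebraMap_eq_smul_one, Matrix.smul_mulVec,
        Matrix.one_mulVec, heis4_mulVec _ hsC]
      rw [sub_eq_zero]
      congr 1
      try push_cast
      try ring
    have h0 : vv ((Real.sqrt 3 : ℝ) : ℂ) = 0 := by
      apply hinj
      rw [hv, Matrix.mulVec_zero]
    have hcontra := congrFun h0 (0,0,1,1)
    simp [vv] at hcontra
  · -- upper bound
    rintro x hx
    have hmem := spectrum.subset_polynomial_aeval heis4 pAnn ⟨(x:ℂ), hx, rfl⟩
    rw [aeval_heis4, spectrum.zero_eq] at hmem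
    have h0 : Polynomial.eval (x:ℂ) pAnn = 0 := hmem
    have hC : (((4*x-1) * (4*x+3) * ((4*x-3)^2 - 12) * ((4*x-1)^2 - 8) : ℝ) : ℂ) = 0 := by
      rw [← h0]
      simp [pAnn]
      try push_cast
      try ring
    have hR : ((4*x-1) * (4*x+3) * ((4*x-3)^2 - 12) * ((4*x-1)^2 - 8) : ℝ) = 0 := by
      exact_mod_cast hC
    rcases mul_eq_zero.mp hR with h | h4
    · rcases mul_eq_zero.mp h with h | h3
      · rcases mul_eq_zero.mp h with h1 | h2
        · nlinarith
        · nlinarith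
      · have hsq : (4*x-3)^2 = 12 := by linarith
        nlinarith [sq_nonneg (4*x - 3 - 2*Real.sqrt 3), sq_nonneg (4*x - 3 + 2*Real.sqrt 3)]
    · have hsq : (4*x-1)^2 = 8 := by linarith
      nlinarith [sq_nonneg (4*x - 1 - 2*Real.sqrt 3), sq_nonneg (4*x - 1 + 2*Real.sqrt 3),
        sq_nonneg (Real.sqrt 3 - 1)]

end
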